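/- Let h ∼ CN(0, R) be a K-dimensional circularly-symmetric complex Gaussian vector where R has rank r with positive eigenvalues λ₁,…,λ_r, and let γ* = max_{k=1..K} |h_k|². Then as γ̄ → ∞, P(γ̄·γ* < γ_th) = O(γ̄^{−r}·γ_th^{r}/∏_{i=1}^r λ_i); in particular the diversity order (the exponent of the outage-probability decay in γ̄) equals r = rank(R). -/

import Mathlib

/-!
Write `h = S g` with `g` standard complex Gaussian. The outage event `γ̄ · max_k |h_k|² < γ_th`
forces `‖S g‖² ≤ δ := K γ_th / γ̄`. Diagonalise `Sᴴ S = U diag(d) Uᴴ`: the law of `g` is invariant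
under the unitary `U` (its density depends only on `‖g‖²`), so `‖S g‖²` has the law of
`∑ dᵢ |gᵢ|²`. The event then lies in the box `{|gᵢ|² ≤ δ / dᵢ for dᵢ ≠ 0}`, and a standard complex
Gaussian gives `{|z|² ≤ ρ}` mass at most `ρ`, so the outage probability is at most `δʳ / ∏ dᵢ`
with `r = #{i | dᵢ ≠ 0} = rank (S Sᴴ) = rank R`.
-/

open MeasureTheory ProbabilityTheory Filter Asymptotics
open scoped ComplexOrder

/-- The circularly-symmetric complex Gaussian distribution `CN(0, v)`:
independent real and imaginary parts, each `N(0, v/2)`. -/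
noncomputable def complexGaussian (v : NNReal) : Measure ℂ :=
  ((gaussianReal 0 (v / 2)).prod (gaussianReal 0 (v / 2))).map
    Complex.measurableEquivRealProd.symm

open scoped ENNReal NNReal
open Real Matrix

theorem MeasurableEquiv.map_withDensity_comp {α β : Type*} [MeasurableSpace α] [MeasurableSpace β]
    (e : α ≃ᵐ β) (μ : Measure α) {f : β → ℝ≥0∞} (hf : Measurable f) :
    (μ.withDensity (f ∘ e)).map e = (μ.map e).withDensity f := by
  ext s hs
  rw [Measure.map_apply e.measurable hs, withDensity_apply _ hs,
    withDensity_apply _ (e.measurable hs), setLIntegral_map hs hf e.measurable]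
  rfl

theorem LinearEquiv.map_withDensity_addHaar_of_comp_eq {E : Type*} [NormedAddCommGroup E]
    [NormedSpace ℝ E] [MeasurableSpace E] [BorelSpace E] [FiniteDimensional ℝ E]
    (μ : Measure E) [μ.IsAddHaarMeasure] (e : E ≃ₗ[ℝ] E) {f : E → ℝ≥0∞} (hf : Measurable f)
    (hfe : f ∘ e = f) [IsProbabilityMeasure (μ.withDensity f)] :
    (μ.withDensity f).map e = μ.withDensity f := by
  -- The Jacobian factor `|det e|⁻¹` is pinned to `1` by comparing total masses.
  let em : E ≃ᵐ E := e.toContinuousLinearEquiv.toHomeomorph.toMeasurableEquiv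
  have hcoe : ⇑em = ⇑e := rfl
  have hdet := Measure.map_linearMap_addHaar_eq_smul_addHaar μ (LinearEquiv.isUnit_det' e).ne_zero
  rw [LinearEquiv.coe_coe] at hdet
  have hscale : (μ.withDensity f).map e = ENNReal.ofReal |(LinearMap.det (e : E →ₗ[ℝ] E))⁻¹| •
      μ.withDensity f := by
    calc (μ.withDensity f).map e = (μ.withDensity (f ∘ em)).map em := by rw [hcoe, hfe]
      _ = (μ.map e).withDensity f := em.map_withDensity_comp μ hf
      _ = _ := by rw [hdet, withDensity_smul_measure]
  have : IsProbabilityMeasure ((μ.withDensity f).map e) :=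
    Measure.isProbabilityMeasure_map em.measurable.aemeasurable
  have hunit : ENNReal.ofReal |(LinearMap.det (e : E →ₗ[ℝ] E))⁻¹| = 1 := by
    simpa using (congrArg (· Set.univ) hscale).symm
  rw [hscale, hunit, one_smul]

section Pi

variable {ι : Type*} {X : ι → Type*} [∀ i, MeasurableSpace (X i)] (μ : ∀ i, Measure (X i))
  [∀ i, SigmaFinite (μ i)]

theorem lmarginal_prod_eq_prod_lintegral [DecidableEq ι] {f : ∀ i, X i → ℝ≥0∞}
    (hf : ∀ i, Measurable (f i)) (s : Finset ι) (x : ∀ i, X i) :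
    (∫⋯∫⁻_s, fun y => ∏ i ∈ s, f i (y i) ∂μ) x = ∏ i ∈ s, ∫⁻ a, f i a ∂μ i := by
  have hmeas (t : Finset ι) : Measurable fun y : ∀ i, X i => ∏ i ∈ t, f i (y i) :=
    Finset.measurable_prod _ fun i _ => (hf i).comp (measurable_pi_apply i)
  induction s using Finset.induction generalizing x with
  | empty => simp
  | @insert j s hj ih =>
    have hslice (a : X j) :
        (∫⋯∫⁻_s, fun y => ∏ i ∈ insert j s, f i (y i) ∂μ) (Function.update x j a) =
          f j a * ∏ i ∈ s, ∫⁻ b, f i b ∂μ i := by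
      have hupdate : (fun y => ∏ i ∈ insert j s, f i (y i)) ∘ (Function.update · j a) =
          fun y => f j a * ∏ i ∈ s, f i (y i) := by
        ext y
        rw [Function.comp_apply, Finset.prod_insert hj, Function.update_self]
        congr 1
        exact Finset.prod_congr rfl fun i hi => by
          rw [Function.update_of_ne (ne_of_mem_of_not_mem hi hj)]
      rw [lmarginal_update_of_notMem (hmeas _) hj, hupdate, ← ih x]
      exact lintegral_const_mul _ ((hmeas s).comp measurable_updateFinset)
    rw [lmarginal_insert _ (hmeas _) hj]
    simp_rw [hslice]
    rw [lintegral_mul_const _ (hf j), Finset.prod_insert hj]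

theorem lintegral_fintype_prod_eq_prod [Fintype ι] [∀ i, Nonempty (X i)]
    {f : ∀ i, X i → ℝ≥0∞} (hf : ∀ i, Measurable (f i)) :
    ∫⁻ x, ∏ i, f i (x i) ∂Measure.pi μ = ∏ i, ∫⁻ a, f i a ∂μ i := by
  classical
  rw [lintegral_eq_lmarginal_univ (Classical.arbitrary _)]
  exact lmarginal_prod_eq_prod_lintegral μ hf _ _

theorem MeasureTheory.Measure.pi_withDensity [Fintype ι] [∀ i, Nonempty (X i)]
    {f : ∀ i, X i → ℝ≥0∞} (hf : ∀ i, Measurable (f i))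
    [∀ i, SigmaFinite ((μ i).withDensity (f i))] :
    Measure.pi (fun i => (μ i).withDensity (f i)) =
      (Measure.pi μ).withDensity fun x => ∏ i, f i (x i) := by
  refine Measure.pi_eq fun s hs => ?_
  rw [withDensity_apply' _ (Set.univ.pi s), Measure.restrict_pi_pi,
    lintegral_fintype_prod_eq_prod (fun i => (μ i).restrict (s i)) hf]
  simp_rw [withDensity_apply _ (hs _)]

end Pi

section NormSq

variable {m n : Type*} [Fintype m] [Fintype n]

theorem sum_norm_sq_mulVec (A : Matrix m n ℂ) (y : n → ℂ) :
    ((∑ k, ‖(A *ᵥ y) k‖ ^ 2 : ℝ) : ℂ) = star y ⬝ᵥ (A.conjTranspose * A) *ᵥ y := by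
  rw [← mulVec_mulVec, dotProduct_mulVec, ← star_mulVec]
  simp only [dotProduct, Pi.star_apply, RCLike.star_def, Complex.conj_mul']
  push_cast
  rfl

variable [DecidableEq n]

theorem sum_norm_sq_mulVec_unitary {W : Matrix n n ℂ}
    (hW : W ∈ unitaryGroup n ℂ) (y : n → ℂ) :
    ∑ k, ‖(W *ᵥ y) k‖ ^ 2 = ∑ k, ‖y k‖ ^ 2 := by
  have hW' := sum_norm_sq_mulVec W y
  have h1 := sum_norm_sq_mulVec (1 : Matrix n n ℂ) y
  rw [← star_eq_conjTranspose, mem_unitaryGroup_iff'.mp hW, one_mulVec] at hW'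
  rw [conjTranspose_one, one_mul, one_mulVec] at h1
  exact_mod_cast hW'.trans h1.symm

theorem sum_norm_sq_mul_eigenvectorUnitary_mulVec (S : Matrix m n ℂ)
    (hM : (S.conjTranspose * S).IsHermitian) (y : n → ℂ) :
    ∑ k, ‖((S * (hM.eigenvectorUnitary : Matrix n n ℂ)) *ᵥ y) k‖ ^ 2 =
      ∑ i, hM.eigenvalues i * ‖y i‖ ^ 2 := by
  have hdiag : (S * (hM.eigenvectorUnitary : Matrix n n ℂ)).conjTranspose *
      (S * (hM.eigenvectorUnitary : Matrix n n ℂ)) =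
        diagonal (RCLike.ofReal ∘ hM.eigenvalues) := by
    rw [← hM.conjStarAlgAut_star_eigenvectorUnitary, conjTranspose_mul, ← star_eq_conjTranspose]
    simp [Matrix.mul_assoc]
  have h := sum_norm_sq_mulVec (S * (hM.eigenvectorUnitary : Matrix n n ℂ)) y
  rw [hdiag] at h
  simp only [dotProduct, mulVec_diagonal, Pi.star_apply, RCLike.star_def, Function.comp_apply,
    RCLike.ofReal_eq_complex_ofReal, mul_left_comm (starRingEnd ℂ _), Complex.conj_mul'] at h
  exact_mod_cast h

theorem card_eigenvalues_conjTranspose_mul_self_ne_zero (S : Matrix m n ℂ)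
    (hM : (S.conjTranspose * S).IsHermitian) :
    (Finset.univ.filter fun i => hM.eigenvalues i ≠ 0).card = (S * S.conjTranspose).rank := by
  rw [rank_self_mul_conjTranspose, ← rank_conjTranspose_mul_self, hM.rank_eq_card_non_zero_eigs,
    Fintype.card_subtype]

end NormSq

instance (v : ℝ≥0) : IsProbabilityMeasure (complexGaussian v) :=
  Measure.isProbabilityMeasure_map (by fun_prop)

noncomputable def complexGaussianPDF (v : ℝ≥0) (z : ℂ) : ℝ≥0∞ :=
  ENNReal.ofReal ((π * v)⁻¹ * exp (-‖z‖ ^ 2 / v))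

theorem measurable_complexGaussianPDF (v : ℝ≥0) : Measurable (complexGaussianPDF v) := by
  unfold complexGaussianPDF; fun_prop

theorem complexGaussianPDF_le (v : ℝ≥0) (z : ℂ) :
    complexGaussianPDF v z ≤ ENNReal.ofReal (π * v)⁻¹ := by
  refine ENNReal.ofReal_le_ofReal (mul_le_of_le_one_right (by positivity) ?_)
  exact exp_le_one_iff.mpr (div_nonpos_of_nonpos_of_nonneg (by nlinarith [norm_nonneg z]) v.2)

theorem gaussianPDF_half_mul_gaussianPDF_half {v : ℝ≥0} (hv : v ≠ 0) (x y : ℝ) :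
    gaussianPDF 0 (v / 2) x * gaussianPDF 0 (v / 2) y = complexGaussianPDF v ⟨x, y⟩ := by
  rw [gaussianPDF, gaussianPDF, ← ENNReal.ofReal_mul (gaussianPDFReal_nonneg _ _ _),
    complexGaussianPDF, Complex.sq_norm, Complex.normSq_mk]
  congr 1
  simp only [gaussianPDFReal, NNReal.coe_div, NNReal.coe_ofNat, sub_zero]
  have hsq : √(2 * π * (v / 2)) * √(2 * π * (v / 2)) = π * v := by
    rw [mul_self_sqrt (by positivity)]; ring
  rw [mul_mul_mul_comm, ← mul_inv, hsq, ← exp_add]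
  congr 2
  field_simp
  ring

theorem complexGaussian_eq_withDensity {v : ℝ≥0} (hv : v ≠ 0) :
    complexGaussian v = volume.withDensity (complexGaussianPDF v) := by
  have hv2 : v / 2 ≠ 0 := by simpa using hv
  have hprod : (gaussianReal 0 (v / 2)).prod (gaussianReal 0 (v / 2)) =
      volume.withDensity (complexGaussianPDF v ∘ Complex.measurableEquivRealProd.symm) := by
    rw [gaussianReal_of_var_ne_zero 0 hv2, prod_withDensity (measurable_gaussianPDF _ _)
      (measurable_gaussianPDF _ _), ← Measure.volume_eq_prod]
    congr 1
    ext ⟨x, y⟩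
    exact gaussianPDF_half_mul_gaussianPDF_half hv x y
  rw [complexGaussian, hprod, MeasurableEquiv.map_withDensity_comp _ _
    (measurable_complexGaussianPDF v),
    (Complex.volume_preserving_equiv_real_prod.symm _).map_eq]

theorem complexGaussian_setOf_norm_sq_le_le {v : ℝ≥0} (hv : v ≠ 0) {δ : ℝ} (hδ : 0 ≤ δ) :
    complexGaussian v {z | ‖z‖ ^ 2 ≤ δ} ≤ ENNReal.ofReal (δ / v) := by
  have hball : {z : ℂ | ‖z‖ ^ 2 ≤ δ} = Metric.closedBall 0 √δ := by
    ext z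
    simp [Real.le_sqrt (norm_nonneg z) hδ]
  rw [hball, complexGaussian_eq_withDensity hv, withDensity_apply _ measurableSet_closedBall]
  calc ∫⁻ z in Metric.closedBall 0 √δ, complexGaussianPDF v z
      ≤ ∫⁻ _ in Metric.closedBall 0 √δ, ENNReal.ofReal (π * v)⁻¹ :=
        lintegral_mono (complexGaussianPDF_le v)
    _ = ENNReal.ofReal (δ / v) := by
        rw [setLIntegral_const, Complex.volume_closedBall, ← ENNReal.ofReal_pow (sqrt_nonneg δ),
          sq_sqrt hδ, ← ENNReal.ofReal_coe_nnreal, NNReal.coe_real_pi,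
          ← ENNReal.ofReal_mul (by positivity), ← ENNReal.ofReal_mul (by positivity)]
        congr 1
        field_simp

section PiComplexGaussian

variable {n : Type*} [Fintype n] {v : ℝ≥0}

theorem pi_complexGaussian_eq_withDensity (hv : v ≠ 0) :
    Measure.pi (fun _ : n => complexGaussian v) =
      volume.withDensity fun x => ∏ i, complexGaussianPDF v (x i) := by
  have : SigmaFinite (volume.withDensity (complexGaussianPDF v)) := by
    rw [← complexGaussian_eq_withDensity hv]; infer_instance
  simp_rw [complexGaussian_eq_withDensity hv]
  rw [Measure.pi_withDensity _ fun _ => measurable_complexGaussianPDF v, volume_pi]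

theorem prod_complexGaussianPDF (x : n → ℂ) :
    ∏ i, complexGaussianPDF v (x i) =
      ENNReal.ofReal ((π * v)⁻¹ ^ Fintype.card n * exp (-(∑ i, ‖x i‖ ^ 2) / v)) := by
  simp only [complexGaussianPDF]
  rw [← ENNReal.ofReal_prod_of_nonneg fun _ _ => by positivity,
    Finset.prod_mul_distrib, Finset.prod_const, ← exp_sum, ← Finset.sum_div,
    Finset.sum_neg_distrib, Finset.card_univ]

variable [DecidableEq n]

theorem map_mulVec_pi_complexGaussian (hv : v ≠ 0) {W : Matrix n n ℂ}
    (hW : W ∈ unitaryGroup n ℂ) :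
    (Measure.pi fun _ : n => complexGaussian v).map (W *ᵥ ·) =
      Measure.pi fun _ : n => complexGaussian v := by
  have : IsProbabilityMeasure
      (volume.withDensity fun x : n → ℂ => ∏ i, complexGaussianPDF v (x i)) := by
    rw [← pi_complexGaussian_eq_withDensity hv]; infer_instance
  rw [pi_complexGaussian_eq_withDensity hv]
  refine LinearEquiv.map_withDensity_addHaar_of_comp_eq _
    ((UnitaryGroup.toLinearEquiv ⟨W, hW⟩).restrictScalars ℝ)
    (Finset.measurable_prod _ fun i _ => (measurable_complexGaussianPDF v).comp
      (measurable_pi_apply i)) ?_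
  ext x
  simp only [Function.comp_apply, prod_complexGaussianPDF]
  rw [← sum_norm_sq_mulVec_unitary hW x]
  rfl

end PiComplexGaussian

theorem pi_complexGaussian_setOf_sum_norm_sq_mulVec_le_le {m n : Type*} [Fintype m] [Fintype n]
    [DecidableEq n] {v : ℝ≥0} (hv : v ≠ 0) (S : Matrix m n ℂ)
    (hM : (S.conjTranspose * S).IsHermitian) {δ : ℝ} (hδ : 0 ≤ δ) :
    Measure.pi (fun _ : n => complexGaussian v) {x | ∑ k, ‖(S *ᵥ x) k‖ ^ 2 ≤ δ} ≤
      ENNReal.ofReal (∏ i ∈ Finset.univ.filter (fun i => hM.eigenvalues i ≠ 0),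
        δ / (v * hM.eigenvalues i)) := by
  set d := hM.eigenvalues
  set U : Matrix n n ℂ := (hM.eigenvectorUnitary : Matrix n n ℂ)
  have hd : ∀ i, 0 ≤ d i := (posSemidef_conjTranspose_mul_self S).eigenvalues_nonneg
  have hmeas : MeasurableSet {x : n → ℂ | ∑ k, ‖(S *ᵥ x) k‖ ^ 2 ≤ δ} :=
    measurableSet_le (by fun_prop) measurable_const
  -- In the eigenbasis of `Sᴴ S` the quadratic form is diagonal, so the set lies in a box.
  have hbox : (U *ᵥ ·) ⁻¹' {x | ∑ k, ‖(S *ᵥ x) k‖ ^ 2 ≤ δ} ⊆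
      Set.univ.pi fun i => {z | d i * ‖z‖ ^ 2 ≤ δ} := by
    intro y hy i _
    have hy : ∑ j, d j * ‖y j‖ ^ 2 ≤ δ := by
      rw [← sum_norm_sq_mul_eigenvectorUnitary_mulVec S hM, ← mulVec_mulVec]; exact hy
    exact (Finset.single_le_sum (fun j _ => mul_nonneg (hd j) (sq_nonneg ‖y j‖))
      (Finset.mem_univ i)).trans hy
  have hfactor (i : n) : complexGaussian v {z | d i * ‖z‖ ^ 2 ≤ δ} ≤
      if d i ≠ 0 then ENNReal.ofReal (δ / (v * d i)) else 1 := by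
    split_ifs with hdi
    · have hpos : 0 < d i := (hd i).lt_of_ne' hdi
      have hset : {z : ℂ | d i * ‖z‖ ^ 2 ≤ δ} = {z | ‖z‖ ^ 2 ≤ δ / d i} := by
        ext z; exact (le_div_iff₀' hpos).symm
      rw [hset, mul_comm (v : ℝ), ← div_div]
      exact complexGaussian_setOf_norm_sq_le_le hv (div_nonneg hδ hpos.le)
    · exact prob_le_one
  calc Measure.pi (fun _ : n => complexGaussian v) {x | ∑ k, ‖(S *ᵥ x) k‖ ^ 2 ≤ δ}
      = Measure.pi (fun _ : n => complexGaussian v)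
          ((U *ᵥ ·) ⁻¹' {x | ∑ k, ‖(S *ᵥ x) k‖ ^ 2 ≤ δ}) := by
        conv_lhs => rw [← map_mulVec_pi_complexGaussian hv hM.eigenvectorUnitary.2]
        exact Measure.map_apply (by fun_prop) hmeas
    _ ≤ ∏ i, complexGaussian v {z | d i * ‖z‖ ^ 2 ≤ δ} := (measure_mono hbox).trans_eq
        (Measure.pi_pi _ _)
    _ ≤ ∏ i, if d i ≠ 0 then ENNReal.ofReal (δ / (v * d i)) else 1 :=
        Finset.prod_le_prod' fun i _ => hfactor i
    _ = _ := by
        rw [← Finset.prod_filter, ENNReal.ofReal_prod_of_nonneg fun i _ => by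
          have := hd i; positivity]

theorem measure_mul_iSup_norm_sq_mulVec_lt_le {Ω m n : Type*} [MeasurableSpace Ω] [Fintype m]
    [Fintype n] [DecidableEq n] (P : Measure Ω) (S : Matrix m n ℂ)
    (hM : (S.conjTranspose * S).IsHermitian)
    {g : Ω → n → ℂ} (hg : Measurable g)
    (hgdist : P.map g = Measure.pi fun _ : n => complexGaussian 1)
    {γth γbar : ℝ} (hγth : 0 ≤ γth) (hγbar : 0 < γbar) :
    P {ω | γbar * (⨆ k, ‖(S *ᵥ g ω) k‖ ^ 2) < γth} ≤
      ENNReal.ofReal ((Fintype.card m * γth / γbar) ^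
          (Finset.univ.filter fun i => hM.eigenvalues i ≠ 0).card /
        ∏ i ∈ Finset.univ.filter (fun i => hM.eigenvalues i ≠ 0), hM.eigenvalues i) := by
  set δ := Fintype.card m * γth / γbar
  have hsub : {ω | γbar * (⨆ k, ‖(S *ᵥ g ω) k‖ ^ 2) < γth} ⊆
      g ⁻¹' {x | ∑ k, ‖(S *ᵥ x) k‖ ^ 2 ≤ δ} := by
    intro ω hω
    have hsup : (⨆ k, ‖(S *ᵥ g ω) k‖ ^ 2) ≤ γth / γbar :=
      ((lt_div_iff₀' hγbar).mpr hω).le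
    calc ∑ k, ‖(S *ᵥ g ω) k‖ ^ 2 ≤ Fintype.card m • ⨆ k, ‖(S *ᵥ g ω) k‖ ^ 2 :=
          Finset.sum_le_card_nsmul _ _ _ fun k _ =>
            le_ciSup (f := fun k => ‖(S *ᵥ g ω) k‖ ^ 2) (Set.finite_range _).bddAbove k
      _ ≤ Fintype.card m * (γth / γbar) := by rw [nsmul_eq_mul]; gcongr
      _ = δ := (mul_div_assoc _ _ _).symm
  calc P {ω | γbar * (⨆ k, ‖(S *ᵥ g ω) k‖ ^ 2) < γth}
      ≤ P.map g {x | ∑ k, ‖(S *ᵥ x) k‖ ^ 2 ≤ δ} :=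
        (measure_mono hsub).trans_eq
          (Measure.map_apply hg (measurableSet_le (by fun_prop) measurable_const)).symm
    _ ≤ _ := by
        rw [hgdist]
        refine (pi_complexGaussian_setOf_sum_norm_sq_mulVec_le_le one_ne_zero S hM
          (by positivity)).trans_eq ?_
        simp only [NNReal.coe_one, one_mul, Finset.prod_div_distrib, Finset.prod_const]

theorem stmt19_general {Ω : Type*} [MeasureSpace Ω]
    {K : ℕ} (R S : Matrix (Fin K) (Fin K) ℂ)
    (hR : R.PosSemidef) (hS : S * S.conjTranspose = R)
    (g : Ω → Fin K → ℂ) (hg : Measurable g)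
    (hgdist : Measure.map g ℙ = Measure.pi fun _ : Fin K => complexGaussian 1)
    (h : Ω → Fin K → ℂ) (hh : h = fun ω => S.mulVec (g ω))
    (γth : ℝ) (hγth : 0 < γth) :
    (fun γbar : ℝ =>
        (ℙ {ω | γbar * (⨆ k : Fin K, ‖h ω k‖ ^ 2) < γth}).toReal)
      =O[atTop] (fun γbar : ℝ =>
        γbar ^ (-(R.rank : ℝ)) * γth ^ (R.rank) /
          ∏ i ∈ Finset.univ.filter (fun i => hR.1.eigenvalues i ≠ 0),
            hR.1.eigenvalues i) := by
  subst hh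
  set hM := (posSemidef_conjTranspose_mul_self S).1
  set Λ := ∏ i ∈ Finset.univ.filter (fun i => hR.1.eigenvalues i ≠ 0), hR.1.eigenvalues i
  set D := ∏ i ∈ Finset.univ.filter (fun i => hM.eigenvalues i ≠ 0), hM.eigenvalues i
  have hrank : (Finset.univ.filter fun i => hM.eigenvalues i ≠ 0).card = R.rank := by
    rw [← hS]; exact card_eigenvalues_conjTranspose_mul_self_ne_zero S hM
  have hΛ : Λ ≠ 0 := Finset.prod_ne_zero_iff.mpr fun i hi => (Finset.mem_filter.mp hi).2
  have hΛ₀ : 0 ≤ Λ := Finset.prod_nonneg fun i _ => hR.eigenvalues_nonneg i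
  have hD₀ : 0 ≤ D :=
    Finset.prod_nonneg fun i _ => (posSemidef_conjTranspose_mul_self S).eigenvalues_nonneg i
  refine IsBigO.of_bound ((K : ℝ) ^ R.rank * Λ / D) ?_
  filter_upwards [eventually_gt_atTop 0] with γbar hγbar
  have hbound := measure_mul_iSup_norm_sq_mulVec_lt_le ℙ S hM hg hgdist hγth.le hγbar
  rw [hrank, Fintype.card_fin] at hbound
  rw [Real.norm_of_nonneg ENNReal.toReal_nonneg, Real.rpow_neg hγbar.le, Real.rpow_natCast]
  calc _ ≤ (K * γth / γbar) ^ R.rank / D := ENNReal.toReal_le_of_le_ofReal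
        (div_nonneg (by positivity) hD₀) hbound
    _ = (K : ℝ) ^ R.rank * Λ / D * ((γbar ^ R.rank)⁻¹ * γth ^ R.rank / Λ) := by
        rw [div_pow, mul_pow]
        field_simp
    _ ≤ _ := mul_le_mul_of_nonneg_left (Real.le_norm_self _) (by positivity)

/-- Theorem 2: let `h ∼ CN(0, R)` be a `K`-dimensional circularly-symmetric
complex Gaussian vector (realized as `h = S·h̃` with `S Sᴴ = R` and `h̃` a
vector of i.i.d. standard complex Gaussians), where `R` is positive
semidefinite of rank `r` with positive eigenvalues `λ₁, …, λ_r` (the nonzero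
eigenvalues of `R`), and let `γ* = max_k |h_k|²`. Then, as `γ̄ → ∞`,
`P(γ̄·γ* < γ_th) = O(γ̄^{−r}·γ_th^{r}/∏ᵢ λᵢ)`: the diversity order equals
`r = rank(R)`. -/
theorem stmt19 {Ω : Type*} [MeasureSpace Ω] [IsProbabilityMeasure (ℙ : Measure Ω)]
    {K : ℕ} (hK : 0 < K) (R S : Matrix (Fin K) (Fin K) ℂ)
    (hR : R.PosSemidef) (hS : S * S.conjTranspose = R)
    (g : Ω → Fin K → ℂ) (hg : Measurable g)
    (hgdist : Measure.map g ℙ = Measure.pi fun _ : Fin K => complexGaussian 1)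
    (h : Ω → Fin K → ℂ) (hh : h = fun ω => S.mulVec (g ω))
    (γth : ℝ) (hγth : 0 < γth) :
    (fun γbar : ℝ =>
        (ℙ {ω | γbar * (⨆ k : Fin K, ‖h ω k‖ ^ 2) < γth}).toReal)
      =O[atTop] (fun γbar : ℝ =>
        γbar ^ (-(R.rank : ℝ)) * γth ^ (R.rank) /
          ∏ i ∈ Finset.univ.filter (fun i => hR.1.eigenvalues i ≠ 0),
            hR.1.eigenvalues i) :=
  stmt19_general R S hR hS g hg hgdist h hh γth hγth
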